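/- arXiv:0709.2672 — 2 statements merged into one kernel-verified Lean document; each statement's English description precedes it below -/
import Mathlib

section
/- Let p > 1 be real. Then L(Q^{(p+1)/2}) = −(1/4)·(p−1)(p+3)·Q^{(p+1)/2} on ℝ (so Q^{(p+1)/2} is an eigenfunction of L with eigenvalue −(1/4)(p−1)(p+3)), and L(Q') = 0 on ℝ. -/
/-!
With `b = (p - 1) / 2`, every real power `Q ^ e` is a constant multiple of `cosh (b x) ^ μ` with
`μ = -2e / (p - 1)`, and `(cosh (b x) ^ μ)'' = μ b² (μ - (μ - 1) / cosh² (b x)) cosh (b x) ^ μ`.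
Since also `Q ^ (p - 1) = (p + 1) / (2 cosh² (b x))`, applying `L` to `Q ^ ((p + 1) / 2)` is a
matter of collecting the coefficients of `1` and `1 / cosh²`. The same computation for `e = 1`
gives the profile equation `Q'' = Q - Q ^ p`, and differentiating it yields `L Q' = 0`.
-/

open Real

/-- The soliton profile `Q` for general power `p`. -/
noncomputable def Qgen (p : ℝ) (x : ℝ) : ℝ :=
  ((p + 1) / (2 * Real.cosh ((p - 1) / 2 * x) ^ 2)) ^ (1 / (p - 1))

/-- The linearized operator `L` around the soliton `Q`. -/
noncomputable def Lop (p : ℝ) (w : ℝ → ℝ) (x : ℝ) : ℝ :=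
  -deriv (deriv w) x + w x - p * Qgen p x ^ (p - 1) * w x

section CoshRpow

variable (K b μ : ℝ)

theorem hasDerivAt_cosh_mul_rpow (x : ℝ) :
    HasDerivAt (fun y => cosh (b * y) ^ μ) (μ * b * (sinh (b * x) * cosh (b * x) ^ (μ - 1))) x := by
  convert (((hasDerivAt_id' x).const_mul b).cosh).rpow_const (p := μ) (Or.inl (cosh_pos _).ne')
    using 1
  ring

theorem deriv_const_mul_cosh_mul_rpow :
    deriv (fun y => K * cosh (b * y) ^ μ)
      = fun x => K * μ * b * (sinh (b * x) * cosh (b * x) ^ (μ - 1)) := by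
  funext x
  rw [((hasDerivAt_cosh_mul_rpow b μ x).const_mul K).deriv]
  ring

theorem deriv_deriv_const_mul_cosh_mul_rpow (x : ℝ) :
    deriv (deriv fun y => K * cosh (b * y) ^ μ) x
      = K * μ * b ^ 2 * (μ - (μ - 1) / cosh (b * x) ^ 2) * cosh (b * x) ^ μ := by
  have hsinh : HasDerivAt (fun y => sinh (b * y)) (cosh (b * x) * b) x := by
    simpa using ((hasDerivAt_id x).const_mul b).sinh
  rw [deriv_const_mul_cosh_mul_rpow,
    ((hsinh.fun_mul (hasDerivAt_cosh_mul_rpow b (μ - 1) x)).const_mul (K * μ * b)).deriv]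
  have hc : cosh (b * x) ≠ 0 := (cosh_pos _).ne'
  rw [rpow_sub_one hc, rpow_sub_one hc, rpow_sub_one hc]
  field_simp
  rw [sinh_sq]
  ring

end CoshRpow

section Soliton

variable {p : ℝ}

theorem Qgen_rpow (hp : -1 ≤ p) (e x : ℝ) :
    Qgen p x ^ e = ((p + 1) / 2) ^ (e / (p - 1)) * cosh ((p - 1) / 2 * x) ^ (-2 * (e / (p - 1))) := by
  have hc := cosh_pos ((p - 1) / 2 * x)
  have hA : 0 ≤ (p + 1) / 2 := by linarith
  have hsplit : (p + 1) / (2 * cosh ((p - 1) / 2 * x) ^ 2)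
      = (p + 1) / 2 * cosh ((p - 1) / 2 * x) ^ (-2 : ℝ) := by
    rw [rpow_neg hc.le, rpow_two]
    field_simp
  rw [Qgen, hsplit, ← rpow_mul (by positivity), one_div_mul_eq_div, mul_rpow hA (by positivity),
    ← rpow_mul hc.le]

theorem Qgen_rpow_sub_one (hp : -1 ≤ p) (hp1 : p ≠ 1) (x : ℝ) :
    Qgen p x ^ (p - 1) = (p + 1) / (2 * cosh ((p - 1) / 2 * x) ^ 2) := by
  have hA : 0 ≤ (p + 1) / (2 * cosh ((p - 1) / 2 * x) ^ 2) := by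
    have := cosh_pos ((p - 1) / 2 * x)
    have : 0 ≤ p + 1 := by linarith
    positivity
  rw [Qgen, ← rpow_mul hA, one_div_mul_cancel (sub_ne_zero.2 hp1), rpow_one]

theorem Qgen_eq (hp : -1 ≤ p) :
    Qgen p = fun x => ((p + 1) / 2) ^ (1 / (p - 1)) * cosh ((p - 1) / 2 * x) ^ (-2 * (1 / (p - 1))) := by
  funext x
  simpa only [rpow_one] using Qgen_rpow hp 1 x

theorem Qgen_pos (hp : -1 < p) (x : ℝ) : 0 < Qgen p x := by
  have : 0 < p + 1 := by linarith
  unfold Qgen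
  positivity

theorem differentiable_Qgen (hp : -1 ≤ p) : Differentiable ℝ (Qgen p) := by
  rw [Qgen_eq hp]
  exact fun x => (hasDerivAt_cosh_mul_rpow _ _ x).differentiableAt.const_mul _

theorem deriv_deriv_Qgen (hp : -1 < p) (hp1 : p ≠ 1) (x : ℝ) :
    deriv (deriv (Qgen p)) x = Qgen p x - Qgen p x ^ p := by
  have hQp : Qgen p x ^ p = Qgen p x ^ (p - 1) * Qgen p x := by
    rw [← rpow_add_one (Qgen_pos hp x).ne', sub_add_cancel]
  rw [hQp, Qgen_rpow_sub_one hp.le hp1, Qgen_eq hp.le, deriv_deriv_const_mul_cosh_mul_rpow]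
  have hpm : p - 1 ≠ 0 := sub_ne_zero.2 hp1
  have hc := (cosh_pos ((p - 1) / 2 * x)).ne'
  field_simp
  ring

theorem deriv_deriv_deriv_Qgen (hp : -1 < p) (hp1 : p ≠ 1) (x : ℝ) :
    deriv (deriv (deriv (Qgen p))) x
      = deriv (Qgen p) x - p * Qgen p x ^ (p - 1) * deriv (Qgen p) x := by
  have hQ : HasDerivAt (Qgen p) (deriv (Qgen p) x) x :=
    (differentiable_Qgen hp.le x).hasDerivAt
  rw [funext (deriv_deriv_Qgen hp hp1),
    (hQ.fun_sub (hQ.rpow_const (Or.inl (Qgen_pos hp x).ne'))).deriv]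
  ring

end Soliton

theorem L_eigenfunctions (p : ℝ) (hp : 1 < p) :
    (∀ x : ℝ,
      Lop p (fun y => Qgen p y ^ ((p + 1) / 2)) x
        = -(1 / 4) * (p - 1) * (p + 3) * Qgen p x ^ ((p + 1) / 2)) ∧
    (∀ x : ℝ, Lop p (deriv (Qgen p)) x = 0) := by
  have hp' : -1 < p := by linarith
  have hp1 : p ≠ 1 := hp.ne'
  refine ⟨fun x => ?_, fun x => ?_⟩
  · rw [Lop, Qgen_rpow_sub_one hp'.le hp1, funext (Qgen_rpow hp'.le _), Qgen_rpow hp'.le,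
      deriv_deriv_const_mul_cosh_mul_rpow]
    have hc := (cosh_pos ((p - 1) / 2 * x)).ne'
    have hpm : p - 1 ≠ 0 := sub_ne_zero.2 hp1
    field_simp
    ring
  · rw [Lop, deriv_deriv_deriv_Qgen hp' hp1]
    ring
end

section
/- Suppose f : ℝ → ℝ is twice continuously differentiable with f, f', f'' ∈ L²(ℝ), and suppose there exist constants K > 0 and r > 0 such that |f''(x) − f(x)| ≤ K·(1 + |x|^r)·e^{−|x|} for all x ∈ ℝ. Then there exists a constant K' > 0 such that |f(x)| ≤ K'·(1 + |x|^{r+1})·e^{−|x|} for all x ∈ ℝ. -/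
/-!
On `x ≥ 0` put `g = f'' - f`; then `u = f' + f` and `v = f' - f` solve `u' = u + g` and
`v' = -v + g`. Because `u ∈ L²`, `e^{-x} u(x)` can only tend to `0`, which forces
`u(x) = -e^x ∫_x^∞ e^{-t} g(t) dt = O((1 + x^r) e^{-x})`. Variation of constants gives
`v(x) = e^{-x} (v(0) + ∫_0^x e^t g(t) dt) = O((1 + x^{r+1}) e^{-x})`, and `f = (u - v) / 2`.
Applying this to `x ↦ f (-x)` covers `x ≤ 0`.
-/

open Real MeasureTheory Set Filter Topology

theorem eq_zero_of_tendsto_of_integrableOn_Ioi {E : Type*} [NormedAddCommGroup E]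
    {h : ℝ → E} {a : ℝ} {L : E} (hint : IntegrableOn h (Ioi a))
    (hlim : Tendsto h atTop (𝓝 L)) : L = 0 := by
  by_contra hL
  obtain ⟨M, hM⟩ := eventually_atTop.mp
    (hlim.norm.eventually (lt_mem_nhds (half_lt_self (norm_pos_iff.mpr hL))))
  have hconst : IntegrableOn (fun _ => ‖L‖ / 2) (Ioi (max a M)) := by
    refine (hint.mono_set (Ioi_subset_Ioi (le_max_left a M))).norm.mono'
      aestronglyMeasurable_const ?_
    filter_upwards [ae_restrict_mem measurableSet_Ioi] with t ht
    rw [norm_of_nonneg (by positivity)]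
    exact (hM t (le_of_max_le_right (le_of_lt ht))).le
  rw [integrableOn_const_iff, volume_Ioi] at hconst
  simp [hL] at hconst

theorem integral_Ioi_comp_add_right {E : Type*} [NormedAddCommGroup E] [NormedSpace ℝ E]
    (f : ℝ → E) (x : ℝ) : ∫ s in Ioi 0, f (s + x) = ∫ t in Ioi x, f t := by
  have := (measurePreserving_add_right volume x).setIntegral_preimage_emb
    (measurableEmbedding_addRight x) f (Ioi x)
  rwa [preimage_add_const_Ioi, sub_self] at this

theorem Real.add_rpow_le_two_rpow_mul_add_rpow {a b r : ℝ} (ha : 0 ≤ a) (hb : 0 ≤ b)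
    (hr : 0 ≤ r) : (a + b) ^ r ≤ 2 ^ r * (a ^ r + b ^ r) := by
  wlog hab : a ≤ b generalizing a b
  · simpa only [add_comm] using this hb ha (le_of_not_ge hab)
  calc (a + b) ^ r ≤ (2 * b) ^ r := by gcongr; linarith
    _ = 2 ^ r * b ^ r := mul_rpow zero_le_two hb
    _ ≤ 2 ^ r * (a ^ r + b ^ r) := by gcongr; linarith [rpow_nonneg ha r]

theorem Real.one_add_add_rpow_le {a b r : ℝ} (ha : 0 ≤ a) (hb : 0 ≤ b) (hr : 0 ≤ r) :
    1 + (a + b) ^ r ≤ 2 ^ r * ((1 + a ^ r) * (1 + b ^ r)) := by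
  have := add_rpow_le_two_rpow_mul_add_rpow ha hb hr
  have h2 : 1 ≤ (2 : ℝ) ^ r := one_le_rpow one_le_two hr
  nlinarith [rpow_nonneg ha r, rpow_nonneg hb r, mul_nonneg (rpow_nonneg ha r) (rpow_nonneg hb r)]

theorem Real.rpow_le_one_add_rpow {x a b : ℝ} (hx : 0 ≤ x) (ha : 0 ≤ a) (hab : a ≤ b) :
    x ^ a ≤ 1 + x ^ b := by
  rcases le_total x 1 with hx1 | hx1
  · linarith [rpow_le_one hx hx1 ha, rpow_nonneg hx b]
  · linarith [rpow_le_rpow_of_exponent_le hx1 hab]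

theorem integrableOn_one_add_rpow_mul_exp_neg {r : ℝ} (hr : 0 ≤ r) :
    IntegrableOn (fun s => (1 + s ^ r) * exp (-s)) (Ioi 0) := by
  have hexp : IntegrableOn (fun s : ℝ => exp (-s)) (Ioi 0) := by
    simpa using exp_neg_integrableOn_Ioi 0 one_pos
  have hgamma := GammaIntegral_convergent (s := r + 1) (by linarith)
  simp only [add_sub_cancel_right] at hgamma
  exact (hexp.add hgamma).congr_fun (fun s _ => by simp only [Pi.add_apply]; ring)
    measurableSet_Ioi

theorem integrableOn_one_add_rpow_mul_exp_neg_two_mul {r x : ℝ} (hr : 0 ≤ r) (hx : 0 ≤ x) :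
    IntegrableOn (fun t => (1 + t ^ r) * exp (-(2 * t))) (Ioi x) := by
  refine ((integrableOn_one_add_rpow_mul_exp_neg hr).mono_set (Ioi_subset_Ioi hx)).mono'
    (by fun_prop) ?_
  filter_upwards [ae_restrict_mem measurableSet_Ioi] with t ht
  have ht : 0 ≤ t := hx.trans ht.le
  rw [norm_of_nonneg (by positivity)]
  gcongr
  linarith

theorem integral_Ioi_one_add_rpow_mul_exp_neg_two_mul_le {r x : ℝ} (hr : 0 ≤ r) (hx : 0 ≤ x) :
    ∫ t in Ioi x, (1 + t ^ r) * exp (-(2 * t)) ≤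
      2 ^ r * (∫ s in Ioi 0, (1 + s ^ r) * exp (-s)) * ((1 + x ^ r) * exp (-(2 * x))) := by
  rw [← integral_Ioi_comp_add_right, ← integral_const_mul, ← integral_mul_const]
  refine integral_mono_of_nonneg ?_
    (((integrableOn_one_add_rpow_mul_exp_neg hr).const_mul _).mul_const _) ?_
  · filter_upwards [ae_restrict_mem measurableSet_Ioi] with s hs
    have : 0 ≤ s + x := by linarith [hs.out]
    positivity
  · filter_upwards [ae_restrict_mem measurableSet_Ioi] with s hs
    have hs : 0 ≤ s := hs.out.le
    have hexp : exp (-(2 * (s + x))) ≤ exp (-s) * exp (-(2 * x)) := by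
      rw [← exp_add]; gcongr; linarith
    calc (1 + (s + x) ^ r) * exp (-(2 * (s + x)))
        ≤ 2 ^ r * ((1 + s ^ r) * (1 + x ^ r)) * (exp (-s) * exp (-(2 * x))) := by
          gcongr ?_ * ?_
          exact one_add_add_rpow_le hs hx hr
      _ = _ := by ring

theorem hasDerivAt_exp_neg_mul_mul {y : ℝ → ℝ} {c a t : ℝ}
    (hy : HasDerivAt y (c * y t + a) t) :
    HasDerivAt (fun s => exp (-(c * s)) * y s) (exp (-(c * t)) * a) t := by
  have he : HasDerivAt (fun s => exp (-(c * s))) (exp (-(c * t)) * -(c * 1)) t :=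
    ((hasDerivAt_id t).const_mul c).neg.exp
  exact (he.mul hy).congr_deriv (by ring)

theorem eq_neg_exp_mul_integral_Ioi_of_hasDerivAt {u g : ℝ → ℝ} {x : ℝ} (hx : 0 ≤ x)
    (hu : ∀ t, HasDerivAt u (u t + g t) t) (hu2 : IntegrableOn (fun t => u t ^ 2) (Ioi 0))
    (hg : IntegrableOn (fun t => exp (-t) * g t) (Ioi x)) :
    u x = -(exp x * ∫ t in Ioi x, exp (-t) * g t) := by
  set w : ℝ → ℝ := fun t => exp (-t) * u t
  have hw : ∀ t, HasDerivAt w (exp (-t) * g t) t := fun t => by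
    simpa using hasDerivAt_exp_neg_mul_mul (c := 1) (by simpa using hu t)
  have hlim := tendsto_limUnder_of_hasDerivAt_of_integrableOn_Ioi (fun t _ => hw t) hg
  have hw2 : IntegrableOn (fun t => w t ^ 2) (Ioi x) := by
    have hwc : Continuous w := continuous_iff_continuousAt.2 fun t => (hw t).continuousAt
    refine (hu2.mono_set (Ioi_subset_Ioi hx)).mono' (hwc.pow 2).aestronglyMeasurable ?_
    filter_upwards [ae_restrict_mem measurableSet_Ioi] with t ht
    have : exp (-t) ^ 2 ≤ 1 :=
      pow_le_one₀ (exp_pos _).le (exp_le_one_iff.2 (by linarith [ht.out]))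
    rw [norm_of_nonneg (sq_nonneg _), mul_pow]
    exact mul_le_of_le_one_left (sq_nonneg _) this
  have hzero : limUnder atTop w = 0 :=
    pow_eq_zero_iff two_ne_zero |>.mp (eq_zero_of_tendsto_of_integrableOn_Ioi hw2 (hlim.pow 2))
  rw [integral_Ioi_of_hasDerivAt_of_tendsto' (fun t _ => hw t) hg (hzero ▸ hlim), zero_sub,
    mul_neg, neg_neg, ← mul_assoc, ← exp_add, add_neg_cancel, exp_zero, one_mul]

theorem eq_exp_neg_mul_add_integral_of_hasDerivAt {v g : ℝ → ℝ}
    (hv : ∀ t, HasDerivAt v (-v t + g t) t) (hg : Continuous g) (x : ℝ) :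
    v x = exp (-x) * (v 0 + ∫ t in 0..x, exp t * g t) := by
  have hp : ∀ t, HasDerivAt (fun s => exp s * v s) (exp t * g t) t := fun t => by
    simpa using hasDerivAt_exp_neg_mul_mul (c := -1) (by simpa using hv t)
  rw [intervalIntegral.integral_eq_sub_of_hasDerivAt (fun t _ => hp t)
    ((continuous_exp.mul hg).intervalIntegrable 0 x)]
  simp only [exp_zero, one_mul, add_sub_cancel, ← mul_assoc, ← exp_add, neg_add_cancel]

section ForcedLinearODE

variable {g : ℝ → ℝ} {K r x : ℝ}

theorem abs_le_of_hasDerivAt_self_add {u : ℝ → ℝ} (hK : 0 ≤ K) (hr : 0 ≤ r) (hx : 0 ≤ x)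
    (hu : ∀ t, HasDerivAt u (u t + g t) t) (hu2 : IntegrableOn (fun t => u t ^ 2) (Ioi 0))
    (hgc : Continuous g) (hg : ∀ t, 0 ≤ t → |g t| ≤ K * (1 + t ^ r) * exp (-t)) :
    |u x| ≤ K * 2 ^ r * (∫ s in Ioi 0, (1 + s ^ r) * exp (-s)) * (1 + x ^ r) * exp (-x) := by
  have hbound : ∀ᵐ t ∂volume.restrict (Ioi x),
      ‖exp (-t) * g t‖ ≤ K * ((1 + t ^ r) * exp (-(2 * t))) := by
    filter_upwards [ae_restrict_mem measurableSet_Ioi] with t ht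
    rw [norm_mul, norm_of_nonneg (exp_pos _).le, Real.norm_eq_abs]
    calc exp (-t) * |g t| ≤ exp (-t) * (K * (1 + t ^ r) * exp (-t)) := by
          gcongr; exact hg t (hx.trans ht.out.le)
      _ = _ := by rw [show -(2 * t) = -t + -t by ring, exp_add]; ring
  have hdom := (integrableOn_one_add_rpow_mul_exp_neg_two_mul hr hx).const_mul K
  have hgi : IntegrableOn (fun t => exp (-t) * g t) (Ioi x) :=
    hdom.mono' (by fun_prop : Continuous _).aestronglyMeasurable hbound
  rw [eq_neg_exp_mul_integral_Ioi_of_hasDerivAt hx hu hu2 hgi, abs_neg, abs_mul,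
    abs_of_pos (exp_pos x)]
  calc exp x * |∫ t in Ioi x, exp (-t) * g t|
      ≤ exp x * ∫ t in Ioi x, K * ((1 + t ^ r) * exp (-(2 * t))) := by
        gcongr; simpa only [Real.norm_eq_abs] using norm_integral_le_of_norm_le hdom hbound
    _ ≤ exp x * (K * (2 ^ r * (∫ s in Ioi 0, (1 + s ^ r) * exp (-s)) *
          ((1 + x ^ r) * exp (-(2 * x))))) := by
        rw [integral_const_mul]
        gcongr
        exact integral_Ioi_one_add_rpow_mul_exp_neg_two_mul_le hr hx
    _ = _ := by rw [show -(2 * x) = -x + -x by ring, exp_add, exp_neg]; field_simp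

theorem abs_le_of_hasDerivAt_neg_add {v : ℝ → ℝ} (hK : 0 ≤ K) (hr : 0 ≤ r) (hx : 0 ≤ x)
    (hv : ∀ t, HasDerivAt v (-v t + g t) t) (hgc : Continuous g)
    (hg : ∀ t, 0 ≤ t → |g t| ≤ K * (1 + t ^ r) * exp (-t)) :
    |v x| ≤ (|v 0| + K * (1 + x ^ r) * x) * exp (-x) := by
  have hle : ∀ t ∈ uIoc 0 x, ‖exp t * g t‖ ≤ K * (1 + x ^ r) := by
    intro t ht
    rw [uIoc_of_le hx] at ht
    rw [norm_mul, norm_of_nonneg (exp_pos _).le, Real.norm_eq_abs]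
    calc exp t * |g t| ≤ exp t * (K * (1 + t ^ r) * exp (-t)) := by gcongr; exact hg t ht.1.le
      _ = K * (1 + t ^ r) := by rw [mul_comm, mul_assoc, ← exp_add, neg_add_cancel, exp_zero,
          mul_one]
      _ ≤ K * (1 + x ^ r) := by gcongr; exacts [ht.1.le, ht.2]
  have hint := intervalIntegral.norm_integral_le_of_norm_le_const hle
  rw [Real.norm_eq_abs, sub_zero, abs_of_nonneg hx] at hint
  rw [eq_exp_neg_mul_add_integral_of_hasDerivAt hv hgc x, abs_mul, abs_of_pos (exp_pos _),
    mul_comm]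
  gcongr
  exact (abs_add_le _ _).trans (by gcongr)

end ForcedLinearODE

theorem exists_abs_le_one_add_rpow_mul_exp_neg_of_nonneg (f : ℝ → ℝ) (hf : ContDiff ℝ 2 f)
    (hfL2 : Integrable (fun x => f x ^ 2)) (hf'L2 : Integrable (fun x => deriv f x ^ 2))
    {K r : ℝ} (hK : 0 < K) (hr : 0 ≤ r)
    (hode : ∀ x, 0 ≤ x → |deriv (deriv f) x - f x| ≤ K * (1 + x ^ r) * exp (-x)) :
    ∃ C, 0 < C ∧ ∀ x, 0 ≤ x → |f x| ≤ C * (1 + x ^ (r + 1)) * exp (-x) := by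
  have hdf := hf.differentiable two_ne_zero
  have hdf' := hf.differentiable_deriv_two
  set g := fun t => deriv (deriv f) t - f t
  have hgc : Continuous g := (hf.deriv'.continuous_deriv le_rfl).sub hf.continuous
  set u := fun t => deriv f t + f t
  set v := fun t => deriv f t - f t
  have hu : ∀ t, HasDerivAt u (u t + g t) t := fun t =>
    ((hdf' t).hasDerivAt.add (hdf t).hasDerivAt).congr_deriv (by simp only [u, g]; ring)
  have hv : ∀ t, HasDerivAt v (-v t + g t) t := fun t =>
    ((hdf' t).hasDerivAt.sub (hdf t).hasDerivAt).congr_deriv (by simp only [v, g]; ring)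
  have hu2 : IntegrableOn (fun t => u t ^ 2) (Ioi 0) := by
    refine (((hf'L2.const_mul 2).add (hfL2.const_mul 2)).mono' ?_ ?_).integrableOn
    · exact ((hdf'.continuous.add hdf.continuous).pow 2).aestronglyMeasurable
    · filter_upwards with t
      simp only [norm_of_nonneg (sq_nonneg _), Pi.add_apply, u]
      nlinarith [sq_nonneg (deriv f t - f t)]
  set A := K * 2 ^ r * ∫ s in Ioi 0, (1 + s ^ r) * exp (-s)
  have hA : 0 ≤ A := by
    have := setIntegral_nonneg (μ := volume) measurableSet_Ioi fun s (hs : 0 < s) =>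
      mul_nonneg (add_nonneg zero_le_one (rpow_nonneg hs.le r)) (exp_pos (-s)).le
    positivity
  refine ⟨A + |v 0| + K, by positivity, fun x hx => ?_⟩
  have hu_le := abs_le_of_hasDerivAt_self_add hK.le hr hx hu hu2 hgc hode
  have hv_le := abs_le_of_hasDerivAt_neg_add hK.le hr hx hv hgc hode
  have hxr : 1 + x ^ r ≤ 2 * (1 + x ^ (r + 1)) := by
    linarith [rpow_le_one_add_rpow hx hr (by linarith : r ≤ r + 1), rpow_nonneg hx (r + 1)]
  have hxxr : (1 + x ^ r) * x ≤ 2 * (1 + x ^ (r + 1)) := by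
    have := rpow_le_one_add_rpow hx zero_le_one (by linarith : 1 ≤ r + 1)
    rw [rpow_one, rpow_add_one' hx (by linarith)] at this
    rw [add_mul, one_mul, rpow_add_one' hx (by linarith)]
    linarith [mul_nonneg (rpow_nonneg hx r) hx]
  have hv0 : |v 0| ≤ |v 0| * (2 * (1 + x ^ (r + 1))) :=
    le_mul_of_one_le_right (abs_nonneg _) (by linarith [rpow_nonneg hx (r + 1)])
  have hf_eq : f x = (u x - v x) / 2 := by simp only [u, v]; ring
  rw [hf_eq, abs_div, abs_two, div_le_iff₀ two_pos]
  calc |u x - v x| ≤ |u x| + |v x| := abs_sub _ _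
    _ ≤ A * (1 + x ^ r) * exp (-x) + (|v 0| + K * ((1 + x ^ r) * x)) * exp (-x) := by
        rw [← mul_assoc K]; exact add_le_add hu_le hv_le
    _ ≤ A * (2 * (1 + x ^ (r + 1))) * exp (-x)
        + (|v 0| * (2 * (1 + x ^ (r + 1))) + K * (2 * (1 + x ^ (r + 1)))) * exp (-x) := by
        gcongr
    _ = (A + |v 0| + K) * (1 + x ^ (r + 1)) * exp (-x) * 2 := by ring

theorem deriv_deriv_comp_neg {𝕜 F : Type*} [NontriviallyNormedField 𝕜] [NormedAddCommGroup F]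
    [NormedSpace 𝕜 F] (f : 𝕜 → F) (x : 𝕜) :
    deriv (deriv fun y => f (-y)) x = deriv (deriv f) (-x) := by
  rw [funext (deriv_comp_neg f), deriv.fun_neg, deriv_comp_neg, neg_neg]

theorem decay_from_ode_estimate_general (f : ℝ → ℝ)
    (hf : ContDiff ℝ 2 f)
    (hfL2 : Integrable (fun x => f x ^ 2))
    (hf'L2 : Integrable (fun x => deriv f x ^ 2))
    (K r : ℝ) (hK : 0 < K) (hr : 0 < r)
    (hode : ∀ x : ℝ, |deriv (deriv f) x - f x| ≤ K * (1 + |x| ^ r) * Real.exp (-|x|)) :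
    ∃ K' : ℝ, 0 < K' ∧ ∀ x : ℝ, |f x| ≤ K' * (1 + |x| ^ (r + 1)) * Real.exp (-|x|) := by
  obtain ⟨C₁, hC₁, h₁⟩ := exists_abs_le_one_add_rpow_mul_exp_neg_of_nonneg f hf hfL2 hf'L2 hK
    hr.le fun x hx => by simpa only [abs_of_nonneg hx] using hode x
  obtain ⟨C₂, -, h₂⟩ := exists_abs_le_one_add_rpow_mul_exp_neg_of_nonneg (fun x => f (-x))
    (hf.comp contDiff_neg) hfL2.comp_neg
    (by simpa only [deriv_comp_neg, neg_sq] using hf'L2.comp_neg) hK hr.le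
    fun x hx => by
      simpa only [deriv_deriv_comp_neg, abs_neg, abs_of_nonneg hx] using hode (-x)
  refine ⟨max C₁ C₂, lt_max_of_lt_left hC₁, fun x => ?_⟩
  rcases le_total 0 x with hx | hx
  · calc |f x| ≤ C₁ * (1 + |x| ^ (r + 1)) * exp (-|x|) := by
          simpa only [abs_of_nonneg hx] using h₁ x hx
      _ ≤ _ := by gcongr; exact le_max_left _ _
  · calc |f x| ≤ C₂ * (1 + |x| ^ (r + 1)) * exp (-|x|) := by
          simpa only [abs_of_nonpos hx, neg_neg] using h₂ (-x) (neg_nonneg.2 hx)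
      _ ≤ _ := by gcongr; exact le_max_right _ _

theorem decay_from_ode_estimate (f : ℝ → ℝ)
    (hf : ContDiff ℝ 2 f)
    (hfL2 : Integrable (fun x => f x ^ 2))
    (hf'L2 : Integrable (fun x => deriv f x ^ 2))
    (hf''L2 : Integrable (fun x => deriv (deriv f) x ^ 2))
    (K r : ℝ) (hK : 0 < K) (hr : 0 < r)
    (hode : ∀ x : ℝ, |deriv (deriv f) x - f x| ≤ K * (1 + |x| ^ r) * Real.exp (-|x|)) :
    ∃ K' : ℝ, 0 < K' ∧ ∀ x : ℝ, |f x| ≤ K' * (1 + |x| ^ (r + 1)) * Real.exp (-|x|) :=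
  decay_from_ode_estimate_general f hf hfL2 hf'L2 K r hK hr hode
end
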